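/- Let A be an n×n real skew-symmetric matrix whose graph is a tree T, and suppose A has the Duarte property with respect to a vertex w. If X is a real skew-symmetric matrix such that A ∘ X = 0 (entrywise Hadamard product is zero) and the commutator [A,X] = AX - XA has all entries zero outside row w and column w (i.e., [A,X](w) = 0), then X = 0. -/

import Mathlib

open Polynomial Matrix Finset
open scoped Classical

noncomputable section

/-- The graph of a square real matrix: `i ~ j` iff `i ≠ j` and the `(i,j)` or
`(j,i)` entry is nonzero. -/
def graphOf {N : ℕ} (A : Matrix (Fin N) (Fin N) ℝ) : SimpleGraph (Fin N) :=
  SimpleGraph.fromRel (fun i j => A i j ≠ 0)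

/-- The principal submatrix of `A` on the index set `S`. -/
def subOn {N : ℕ} (A : Matrix (Fin N) (Fin N) ℝ) (S : Finset (Fin N)) :
    Matrix {x // x ∈ S} {x // x ∈ S} ℝ :=
  A.submatrix (fun x => x.1) (fun x => x.1)

/-- The vertex set of the connected component of `v` in the subgraph of `G`
induced on `S`. -/
def comp {N : ℕ} (G : SimpleGraph (Fin N)) (S : Finset (Fin N)) (v : Fin N) :
    Finset (Fin N) :=
  S.filter (fun u => ∃ w : G.Walk v u, ∀ x ∈ w.support, x ∈ S)

/-- The eigenvalues of the real skew-symmetric matrix `A` are `i·l 0, …`,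
expressed via the characteristic polynomial over `ℂ`. -/
def specIm {m : Type} [Fintype m] [DecidableEq m] (A : Matrix m m ℝ)
    (l : Fin (Fintype.card m) → ℝ) : Prop :=
  (A.map (Complex.ofReal : ℝ → ℂ)).charpoly = ∏ j, (X - C (Complex.I * (l j : ℂ)))

/-- The (purely imaginary) spectrum of `B` strictly interlaces that of `A`,
in the ordering `i·a ≤ i·b ↔ a ≤ b`. -/
def StrictInterlace {m m' : Type} [Fintype m] [DecidableEq m] [Fintype m'] [DecidableEq m']
    (A : Matrix m m ℝ) (B : Matrix m' m' ℝ) : Prop :=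
  ∃ (h : Fintype.card m' + 1 = Fintype.card m) (l : Fin (Fintype.card m) → ℝ)
    (mu : Fin (Fintype.card m') → ℝ),
    specIm A l ∧ specIm B mu ∧
      ∀ j : Fin (Fintype.card m'),
        l (Fin.cast h j.castSucc) < mu j ∧ mu j < l (Fin.cast h j.succ)

/-- Fuel-based recursion for the Duarte property of the principal submatrix of
`A` on `S` with respect to the vertex `w ∈ S`. -/
def DuarteAux {N : ℕ} (A : Matrix (Fin N) (Fin N) ℝ) :
    ℕ → Finset (Fin N) → Fin N → Prop
  | 0, S, w => S = {w}
  | (k + 1), S, w => S = {w} ∨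
      (StrictInterlace (subOn A S) (subOn A (S.erase w)) ∧
        ∀ v ∈ S.erase w, (graphOf A).Adj w v →
          DuarteAux A k (comp (graphOf A) (S.erase w) v) v)

/-- `A` has the Duarte property with respect to the vertex `w`. -/
def Duarte {N : ℕ} (A : Matrix (Fin N) (Fin N) ℝ) (w : Fin N) : Prop :=
  DuarteAux A N Finset.univ w

/-- Fuel-based recursion for the nearly even branching (NEB) property of the
subtree of `T` on `S` at the vertex `w ∈ S`. -/
def NEBAux {N : ℕ} (T : SimpleGraph (Fin N)) : ℕ → Finset (Fin N) → Fin N → Prop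
  | 0, S, w => S = {w}
  | (k + 1), S, w => S = {w} ∨
      ((((S.erase w).filter
            (fun v => T.Adj w v ∧ Odd (comp T (S.erase w) v).card)).card
          = if Even S.card then 1 else 0) ∧
        ∀ v ∈ S.erase w, T.Adj w v → NEBAux T k (comp T (S.erase w) v) v)

/-- The tree `T` is nearly even branching (NEB) at the vertex `w`. -/
def NEB {N : ℕ} (T : SimpleGraph (Fin N)) (w : Fin N) : Prop :=
  NEBAux T N Finset.univ w

/-!
Induct along the recursive definition of the Duarte property. Deleting `w` splits the tree
into branches, one through each neighbour `v` of `w`, and `A(w)` is block diagonal along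
them. On the diagonal block of a branch, the commutator condition is the one for the branch
with `v` deleted, so induction kills those blocks of `Y`; entry `(v, j)` of `[A, Y]` then
reduces to `A v w * Y w j`, which kills row and column `w`. An off-diagonal block `W` between
two branches now satisfies the Sylvester equation `A_v W = W A_v'`. Strict interlacing makes
the eigenvalues of `A(w)` simple, so `A_v` and `A_v'` have coprime characteristic polynomials
and `W = 0`.
-/

section Sylvester

variable {R : Type*} [CommRing R] {α β : Type*} [Fintype α] [DecidableEq α]
  [Fintype β] [DecidableEq β]

theorem Matrix.aeval_mul_eq_mul_aeval {P : Matrix α α R} {Q : Matrix β β R} {W : Matrix α β R}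
    (h : P * W = W * Q) (p : R[X]) : aeval P p * W = W * aeval Q p := by
  induction p using Polynomial.induction_on with
  | C a => simp [Algebra.algebraMap_eq_smul_one]
  | add p q hp hq => simp only [map_add, Matrix.add_mul, Matrix.mul_add, hp, hq]
  | monomial n a ih =>
    rw [pow_succ, ← mul_assoc, map_mul, map_mul (aeval Q), aeval_X, aeval_X, Matrix.mul_assoc, h,
      ← Matrix.mul_assoc, ih, Matrix.mul_assoc]

/-- By Bézout, `b(P)` inverts `χ_Q(P)`, which kills `W` by Cayley–Hamilton. -/
theorem Matrix.eq_zero_of_mul_eq_mul_of_isCoprime {P : Matrix α α R} {Q : Matrix β β R}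
    {W : Matrix α β R} (hPQ : IsCoprime P.charpoly Q.charpoly) (h : P * W = W * Q) : W = 0 := by
  obtain ⟨a, b, hab⟩ := hPQ
  have hinv : aeval P b * aeval P Q.charpoly = 1 := by
    rw [← map_mul, ← sub_eq_of_eq_add' hab.symm]
    simp [aeval_self_charpoly]
  calc W = aeval P b * (aeval P Q.charpoly * W) := by rw [← Matrix.mul_assoc, hinv, Matrix.one_mul]
    _ = 0 := by rw [aeval_mul_eq_mul_aeval h, aeval_self_charpoly, Matrix.mul_zero, Matrix.mul_zero]

end Sylvester

theorem strictMono_of_interlace {n : ℕ} {l : Fin (n + 1) → ℝ} {μ : Fin n → ℝ}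
    (h : ∀ j, l j.castSucc < μ j ∧ μ j < l j.succ) : StrictMono μ := by
  have hl : StrictMono l := Fin.strictMono_iff_lt_succ.mpr fun j => (h j).1.trans (h j).2
  intro j j' hjj'
  calc μ j < l j.succ := (h j).2
    _ ≤ l j'.castSucc := hl.monotone (Fin.succ_le_castSucc_iff.mpr hjj')
    _ < μ j' := (h j').1

theorem specIm.separable_charpoly {m : Type} [Fintype m] [DecidableEq m] {A : Matrix m m ℝ}
    {l : Fin (Fintype.card m) → ℝ} (hA : specIm A l) (hl : Function.Injective l) :
    A.charpoly.Separable := by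
  rw [← separable_map Complex.ofRealHom, ← charpoly_map]
  refine hA ▸ separable_prod_X_sub_C_iff.mpr fun j j' hjj' => hl ?_
  exact_mod_cast mul_left_cancel₀ Complex.I_ne_zero hjj'

theorem StrictInterlace.separable_charpoly {m m' : Type} [Fintype m] [DecidableEq m]
    [Fintype m'] [DecidableEq m'] {A : Matrix m m ℝ} {B : Matrix m' m' ℝ}
    (h : StrictInterlace A B) : B.charpoly.Separable := by
  obtain ⟨hcard, l, μ, -, hμ, hlμ⟩ := h
  exact hμ.separable_charpoly (strictMono_of_interlace (l := l ∘ Fin.cast hcard) hlμ).injective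

section Blocks

variable {N : ℕ} {A : Matrix (Fin N) (Fin N) ℝ}

theorem charpoly_subOn_union {C D : Finset (Fin N)} (hCD : Disjoint C D)
    (hA : ∀ i ∈ C, ∀ j ∈ D, A i j = 0 ∧ A j i = 0) :
    (subOn A (C ∪ D)).charpoly = (subOn A C).charpoly * (subOn A D).charpoly := by
  let e : {x // x ∈ C ∪ D} ≃ {x // x ∈ C} ⊕ {x // x ∈ D} :=
    (Equiv.subtypeEquivRight fun _ => Finset.mem_union).trans
      (subtypeOrEquiv _ _ (Finset.disjoint_coe.mpr hCD))
  have hblocks : reindex e e (subOn A (C ∪ D)) = fromBlocks (subOn A C) 0 0 (subOn A D) := by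
    ext (a | a) (b | b)
    · exact rfl
    · exact (hA a a.2 b b.2).1
    · exact (hA b b.2 a a.2).2
    · exact rfl
  rw [← charpoly_reindex e, hblocks, charpoly_fromBlocks_zero₁₂]

theorem charpoly_subOn_dvd {C S : Finset (Fin N)} (hCS : C ⊆ S)
    (hA : ∀ i ∈ C, ∀ j ∈ S \ C, A i j = 0 ∧ A j i = 0) :
    (subOn A C).charpoly ∣ (subOn A S).charpoly := by
  rw [← Finset.union_sdiff_of_subset hCS, charpoly_subOn_union Finset.disjoint_sdiff hA]
  exact dvd_mul_right _ _

end Blocks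

section Components

open SimpleGraph (Walk)

variable {N : ℕ} {G : SimpleGraph (Fin N)} {S : Finset (Fin N)} {u v w x : Fin N}

theorem comp_subset : comp G S v ⊆ S :=
  Finset.filter_subset _ _

theorem mem_comp_self (hv : v ∈ S) : v ∈ comp G S v :=
  Finset.mem_filter.mpr ⟨hv, .nil, by simpa using hv⟩

theorem mem_of_mem_comp (hu : u ∈ comp G S v) : v ∈ S := by
  obtain ⟨-, p, hp⟩ := Finset.mem_filter.mp hu
  exact hp v p.start_mem_support

theorem mem_comp_of_adj (hu : u ∈ comp G S v) (hux : G.Adj u x) (hx : x ∈ S) :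
    x ∈ comp G S v := by
  obtain ⟨-, p, hp⟩ := Finset.mem_filter.mp hu
  refine Finset.mem_filter.mpr ⟨hx, p.concat hux, fun y hy => ?_⟩
  rw [Walk.support_concat, List.mem_append, List.mem_singleton] at hy
  rcases hy with hy | rfl
  exacts [hp y hy, hx]

theorem comp_comp_self : comp G (comp G S v) v = comp G S v := by
  refine subset_antisymm comp_subset fun u hu => ?_
  obtain ⟨-, p, hp⟩ := Finset.mem_filter.mp hu
  refine Finset.mem_filter.mpr ⟨hu, p, fun y hy => Finset.mem_filter.mpr ⟨hp y hy, ?_⟩⟩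
  exact ⟨p.takeUntil y hy, fun z hz => hp z (p.support_takeUntil_subset_support hy hz)⟩

theorem comp_univ_of_connected (hG : G.Connected) : comp G Finset.univ w = Finset.univ := by
  refine Finset.eq_univ_of_forall fun u => Finset.mem_filter.mpr ⟨Finset.mem_univ u, ?_⟩
  obtain ⟨p⟩ := hG.preconnected w u
  exact ⟨p, fun _ _ => Finset.mem_univ _⟩

/-- A common vertex would give a path from `v` to `v'` inside `S`, besides `v - w - v'`. -/
theorem eq_of_mem_comp_of_mem_comp (hG : G.IsAcyclic) (hw : w ∉ S) (hv : G.Adj w v)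
    {v' : Fin N} (hv' : G.Adj w v') (hu : u ∈ comp G S v) (hu' : u ∈ comp G S v') :
    v = v' := by
  by_contra hne
  obtain ⟨-, p, hp⟩ := Finset.mem_filter.mp hu
  obtain ⟨-, q, hq⟩ := Finset.mem_filter.mp hu'
  let r := (p.append q.reverse).toPath
  have hrS : ∀ y ∈ (r : G.Walk v v').support, y ∈ S := by
    intro y hy
    have := (p.append q.reverse).support_toPath_subset_support hy
    rw [Walk.mem_support_append_iff, Walk.support_reverse, List.mem_reverse] at this
    exact this.elim (hp y) (hq y)
  let s : G.Path v v' := ⟨.cons hv.symm (.cons hv' .nil), by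
    simp [Walk.isPath_def, hv.ne', hv'.ne, hne]⟩
  have hws : w ∈ (s : G.Walk v v').support := by simp [s]
  rw [(hG.subsingleton_path v v').elim s r] at hws
  exact hw (hrS w hws)

theorem exists_adj_mem_comp_erase (hS : comp G S w = S) (hu : u ∈ S) (huw : u ≠ w) :
    ∃ v, G.Adj w v ∧ u ∈ comp G (S.erase w) v := by
  obtain ⟨-, p, hp⟩ := Finset.mem_filter.mp (hS.symm ▸ hu : u ∈ comp G S w)
  have hpS : ∀ y ∈ p.toPath.val.support, y ∈ S :=
    fun y hy => hp y (p.support_toPath_subset_support hy)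
  generalize p.toPath = q at hpS
  obtain ⟨q, hq⟩ := q
  cases q with
  | nil => exact absurd rfl huw
  | @cons _ v _ hwv tail =>
    have hwtail : w ∉ tail.support := (Walk.cons_isPath_iff hwv tail).mp hq |>.2
    have htail : ∀ y ∈ tail.support, y ∈ S.erase w := fun y hy =>
      Finset.mem_erase.mpr ⟨fun h => hwtail (h ▸ hy), hpS y (List.mem_cons_of_mem _ hy)⟩
    exact ⟨v, hwv, Finset.mem_filter.mpr ⟨htail u tail.end_mem_support, tail, htail⟩⟩

theorem mem_comp_erase_or (hG : G.IsAcyclic) (hv : G.Adj w v) {i : Fin N}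
    (hi : i ∈ comp G (S.erase w) v) (hix : G.Adj i x) (hx : x ∈ S) :
    x ∈ comp G (S.erase w) v ∨ i = v ∧ x = w := by
  by_cases hxw : x = w
  · subst hxw
    have hiS : i ∈ S.erase x := comp_subset hi
    exact .inr ⟨eq_of_mem_comp_of_mem_comp hG (Finset.notMem_erase x S) hix.symm hv
      (mem_comp_self hiS) hi, rfl⟩
  · exact .inl (mem_comp_of_adj hi hix (Finset.mem_erase.mpr ⟨hxw, hx⟩))

end Components

section Skew

variable {n : Type*} {M : Matrix n n ℝ}

theorem apply_eq_neg_apply_of_transpose_eq_neg (h : Mᵀ = -M) (i j : n) : M i j = -M j i :=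
  congrFun (congrFun h j) i

theorem apply_self_eq_zero_of_transpose_eq_neg (h : Mᵀ = -M) (i : n) : M i i = 0 := by
  linarith [apply_eq_neg_apply_of_transpose_eq_neg h i i]

end Skew

section Commutator

variable {N : ℕ} {A Z : Matrix (Fin N) (Fin N) ℝ} {S : Finset (Fin N)} {i j v w x : Fin N}

/-- `[A_S, Z_S](w) = 0`, where `M_S` is the principal submatrix of `M` on `S`. -/
def CommutatorVanishesOff (A Z : Matrix (Fin N) (Fin N) ℝ) (S : Finset (Fin N)) (w : Fin N) :
    Prop :=
  ∀ i ∈ S, ∀ j ∈ S, i ≠ w → j ≠ w → ∑ x ∈ S, A i x * Z x j = ∑ x ∈ S, Z i x * A x j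

theorem apply_ne_zero_of_adj (hskew : Aᵀ = -A) (h : (graphOf A).Adj i j) : A i j ≠ 0 := by
  obtain ⟨-, h | h⟩ := SimpleGraph.fromRel_adj _ _ _ |>.mp h
  · exact h
  · rwa [apply_eq_neg_apply_of_transpose_eq_neg hskew, neg_ne_zero]

theorem apply_eq_zero_of_adj (hZ : Zᵀ = -Z) (hHad : ∀ i j, A i j * Z i j = 0)
    (h : (graphOf A).Adj i j) : Z i j = 0 := by
  obtain ⟨-, h | h⟩ := SimpleGraph.fromRel_adj _ _ _ |>.mp h
  · exact (mul_eq_zero.mp (hHad i j)).resolve_left h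
  · rw [apply_eq_neg_apply_of_transpose_eq_neg hZ, (mul_eq_zero.mp (hHad j i)).resolve_left h,
      neg_zero]

theorem apply_eq_zero_of_not_mem_comp (hG : (graphOf A).IsAcyclic) (hv : (graphOf A).Adj w v)
    (hi : i ∈ comp (graphOf A) (S.erase w) v) (hx : x ∈ S)
    (hxC : x ∉ comp (graphOf A) (S.erase w) v) (hxw : x ≠ w ∨ i ≠ v) :
    A i x = 0 ∧ A x i = 0 := by
  by_contra hA
  have hix : (graphOf A).Adj i x :=
    (SimpleGraph.fromRel_adj _ _ _).mpr ⟨fun h => hxC (h ▸ hi), by tauto⟩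
  rcases mem_comp_erase_or hG hv hi hix hx with h | ⟨rfl, rfl⟩
  · exact hxC h
  · simp at hxw

theorem sum_mul_eq_sum_comp_left (hG : (graphOf A).IsAcyclic) (hv : (graphOf A).Adj w v)
    (hi : i ∈ comp (graphOf A) (S.erase w) v) (hiw : A i w * Z w j = 0) :
    ∑ x ∈ S, A i x * Z x j = ∑ x ∈ comp (graphOf A) (S.erase w) v, A i x * Z x j := by
  refine (Finset.sum_subset (comp_subset.trans (Finset.erase_subset w S)) fun x hx hxC => ?_).symm
  by_cases hxw : x = w
  · rwa [hxw]
  · rw [(apply_eq_zero_of_not_mem_comp hG hv hi hx hxC (.inl hxw)).1, zero_mul]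

theorem sum_mul_eq_sum_comp_right (hG : (graphOf A).IsAcyclic) (hv : (graphOf A).Adj w v)
    (hj : j ∈ comp (graphOf A) (S.erase w) v) (hjw : Z i w * A w j = 0) :
    ∑ x ∈ S, Z i x * A x j = ∑ x ∈ comp (graphOf A) (S.erase w) v, Z i x * A x j := by
  refine (Finset.sum_subset (comp_subset.trans (Finset.erase_subset w S)) fun x hx hxC => ?_).symm
  by_cases hxw : x = w
  · rwa [hxw]
  · rw [(apply_eq_zero_of_not_mem_comp hG hv hj hx hxC (.inl hxw)).2, mul_zero]

theorem commutatorVanishesOff_comp (hG : (graphOf A).IsAcyclic) (hwS : w ∈ S)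
    (hcomm : CommutatorVanishesOff A Z S w) (hv : (graphOf A).Adj w v) :
    CommutatorVanishesOff A Z (comp (graphOf A) (S.erase w) v) v := by
  intro i hi j hj hiv hjv
  have hCS : comp (graphOf A) (S.erase w) v ⊆ S.erase w := comp_subset
  have hwC : w ∉ comp (graphOf A) (S.erase w) v := fun h => Finset.notMem_erase w S (hCS h)
  have hAiw := apply_eq_zero_of_not_mem_comp hG hv hi hwS hwC (.inr hiv)
  have hAjw := apply_eq_zero_of_not_mem_comp hG hv hj hwS hwC (.inr hjv)
  rw [← sum_mul_eq_sum_comp_left hG hv hi (by rw [hAiw.1, zero_mul]),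
    ← sum_mul_eq_sum_comp_right hG hv hj (by rw [hAjw.2, mul_zero])]
  exact hcomm i (Finset.mem_of_mem_erase (hCS hi)) j (Finset.mem_of_mem_erase (hCS hj))
    (Finset.ne_of_mem_erase (hCS hi)) (Finset.ne_of_mem_erase (hCS hj))

end Commutator

section DuarteStep

variable {N : ℕ} {A Z : Matrix (Fin N) (Fin N) ℝ} {S : Finset (Fin N)} {w : Fin N}

theorem row_eq_zero_of_comp_blocks (hskew : Aᵀ = -A) (hZ : Zᵀ = -Z)
    (hHad : ∀ i j, A i j * Z i j = 0) (hG : (graphOf A).IsAcyclic) (hwS : w ∈ S)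
    (hS : comp (graphOf A) S w = S) (hcomm : CommutatorVanishesOff A Z S w)
    (hblock : ∀ v, (graphOf A).Adj w v → ∀ i ∈ comp (graphOf A) (S.erase w) v,
      ∀ j ∈ comp (graphOf A) (S.erase w) v, Z i j = 0) :
    ∀ j ∈ S, Z w j = 0 := by
  intro j hjS
  obtain rfl | hjw := eq_or_ne j w
  · exact apply_self_eq_zero_of_transpose_eq_neg hZ j
  obtain ⟨v, hv, hjC⟩ := exists_adj_mem_comp_erase hS hjS hjw
  obtain rfl | hjv := eq_or_ne j v
  · exact apply_eq_zero_of_adj hZ hHad hv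
  have hvC : v ∈ comp (graphOf A) (S.erase w) v := mem_comp_self (mem_of_mem_comp hjC)
  have hvS : v ∈ S.erase w := comp_subset hvC
  -- Entry `(v, j)` of the commutator reduces to `A v w * Z w j`.
  have hcomm_vj := hcomm v (Finset.mem_of_mem_erase hvS) j hjS (Finset.ne_of_mem_erase hvS) hjw
  rw [Finset.sum_eq_single_of_mem w hwS fun x hx hxw => ?_,
    Finset.sum_eq_zero fun x hx => ?_] at hcomm_vj
  · exact (mul_eq_zero.mp hcomm_vj).resolve_left (apply_ne_zero_of_adj hskew hv.symm)
  · by_cases hxC : x ∈ comp (graphOf A) (S.erase w) v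
    · rw [hblock v hv v hvC x hxC, zero_mul]
    · rw [(apply_eq_zero_of_not_mem_comp hG hv hjC hx hxC (.inr hjv)).2, mul_zero]
  · by_cases hxC : x ∈ comp (graphOf A) (S.erase w) v
    · rw [hblock v hv x hxC j hjC, mul_zero]
    · rw [(apply_eq_zero_of_not_mem_comp hG hv hvC hx hxC (.inl hxw)).1, zero_mul]

theorem cross_block_eq_zero (hG : (graphOf A).IsAcyclic) (hcomm : CommutatorVanishesOff A Z S w)
    (hsep : (subOn A (S.erase w)).charpoly.Separable) (hrow : ∀ j ∈ S, Z w j = 0)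
    (hcol : ∀ i ∈ S, Z i w = 0) {v v' : Fin N} (hv : (graphOf A).Adj w v)
    (hv' : (graphOf A).Adj w v') (hvv' : v ≠ v') :
    ∀ i ∈ comp (graphOf A) (S.erase w) v, ∀ j ∈ comp (graphOf A) (S.erase w) v', Z i j = 0 := by
  set C := comp (graphOf A) (S.erase w) v
  set C' := comp (graphOf A) (S.erase w) v'
  have hCS : C ⊆ S.erase w := comp_subset
  have hC'S : C' ⊆ S.erase w := comp_subset
  have hdecouple : ∀ {u}, ∀ i ∈ comp (graphOf A) (S.erase w) u, (graphOf A).Adj w u →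
      ∀ x ∈ S.erase w, x ∉ comp (graphOf A) (S.erase w) u → A i x = 0 ∧ A x i = 0 :=
    fun i hi hu x hx hxC => apply_eq_zero_of_not_mem_comp hG hu hi (Finset.mem_of_mem_erase hx)
      hxC (.inl (Finset.ne_of_mem_erase hx))
  have hdisj : Disjoint C C' := Finset.disjoint_left.mpr fun u hu hu' =>
    hvv' (eq_of_mem_comp_of_mem_comp hG (Finset.notMem_erase w S) hv hv' hu hu')
  have hcoprime : IsCoprime (subOn A C).charpoly (subOn A C').charpoly := by
    refine Polynomial.Separable.isCoprime (hsep.of_dvd ?_)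
    rw [← charpoly_subOn_union hdisj fun i hi j hj =>
      hdecouple i hi hv j (hC'S hj) (Finset.disjoint_right.mp hdisj hj)]
    refine charpoly_subOn_dvd (Finset.union_subset hCS hC'S) fun i hi j hj => ?_
    rw [Finset.mem_sdiff, Finset.mem_union, not_or] at hj
    rcases Finset.mem_union.mp hi with hi | hi
    exacts [hdecouple i hi hv j hj.1 hj.2.1, hdecouple i hi hv' j hj.1 hj.2.2]
  let W : Matrix C C' ℝ := Z.submatrix (↑) (↑)
  have hW : subOn A C * W = W * subOn A C' := by
    ext ⟨a, ha⟩ ⟨b, hb⟩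
    have haS := hCS ha
    have hbS := hC'S hb
    change ∑ x : C, A a x * Z x b = ∑ x : C', Z a x * A x b
    rw [Finset.sum_coe_sort C (fun x => A a x * Z x b),
      Finset.sum_coe_sort C' (fun x => Z a x * A x b),
      ← sum_mul_eq_sum_comp_left hG hv ha (by rw [hrow b (Finset.mem_of_mem_erase hbS), mul_zero]),
      ← sum_mul_eq_sum_comp_right hG hv' hb
        (by rw [hcol a (Finset.mem_of_mem_erase haS), zero_mul])]
    exact hcomm a (Finset.mem_of_mem_erase haS) b (Finset.mem_of_mem_erase hbS)
      (Finset.ne_of_mem_erase haS) (Finset.ne_of_mem_erase hbS)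
  intro i hi j hj
  exact congrFun (congrFun (Matrix.eq_zero_of_mul_eq_mul_of_isCoprime hcoprime hW) ⟨i, hi⟩) ⟨j, hj⟩

end DuarteStep

section DuarteInduction

variable {N : ℕ} {A Z : Matrix (Fin N) (Fin N) ℝ}

theorem eq_zero_on_singleton (hZ : Zᵀ = -Z) {S : Finset (Fin N)} {w : Fin N} (hS : S = {w}) :
    ∀ i ∈ S, ∀ j ∈ S, Z i j = 0 := by
  subst hS
  simp [apply_self_eq_zero_of_transpose_eq_neg hZ]

theorem eq_zero_on_of_duarteAux (hskew : Aᵀ = -A) (hZ : Zᵀ = -Z)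
    (hHad : ∀ i j, A i j * Z i j = 0) (hG : (graphOf A).IsAcyclic) (k : ℕ) :
    ∀ {S : Finset (Fin N)} {w : Fin N}, w ∈ S → comp (graphOf A) S w = S →
      DuarteAux A k S w → CommutatorVanishesOff A Z S w → ∀ i ∈ S, ∀ j ∈ S, Z i j = 0 := by
  induction k with
  | zero => exact fun _ _ hD _ => eq_zero_on_singleton hZ hD
  | succ k ih =>
    intro S w hwS hS hD hcomm
    rcases hD with hD | ⟨hint, hrec⟩
    · exact eq_zero_on_singleton hZ hD
    have hblock : ∀ v, (graphOf A).Adj w v → ∀ i ∈ comp (graphOf A) (S.erase w) v,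
        ∀ j ∈ comp (graphOf A) (S.erase w) v, Z i j = 0 := fun v hv i hi =>
      have hvS := mem_of_mem_comp hi
      ih (mem_comp_self hvS) comp_comp_self (hrec v hvS hv)
        (commutatorVanishesOff_comp hG hwS hcomm hv) i hi
    have hrow := row_eq_zero_of_comp_blocks hskew hZ hHad hG hwS hS hcomm hblock
    have hcol : ∀ i ∈ S, Z i w = 0 := fun i hi => by
      rw [apply_eq_neg_apply_of_transpose_eq_neg hZ, hrow i hi, neg_zero]
    intro i hi j hj
    obtain rfl | hiw := eq_or_ne i w
    · exact hrow j hj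
    obtain rfl | hjw := eq_or_ne j w
    · exact hcol i hi
    obtain ⟨v, hv, hiC⟩ := exists_adj_mem_comp_erase hS hi hiw
    obtain ⟨v', hv', hjC⟩ := exists_adj_mem_comp_erase hS hj hjw
    obtain rfl | hvv' := eq_or_ne v v'
    · exact hblock v hv i hiC j hjC
    · exact cross_block_eq_zero hG hcomm hint.separable_charpoly hrow hcol hv hv' hvv' i hiC j hjC

end DuarteInduction

/-- Commutator lemma: if `A` is skew-symmetric, its graph is a tree, `A` has
the Duarte property with respect to `w`, and `Y` is skew-symmetric with
`A ∘ Y = 0` and `[A,Y](w) = 0`, then `Y = 0`. -/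
theorem stmt_10 {N : ℕ} (A : Matrix (Fin N) (Fin N) ℝ) (hskew : Aᵀ = -A)
    (htree : (graphOf A).IsTree) (w : Fin N) (hD : Duarte A w)
    (Y : Matrix (Fin N) (Fin N) ℝ) (hYskew : Yᵀ = -Y)
    (hHad : ∀ i j, A i j * Y i j = 0)
    (hcomm : ∀ i j, i ≠ w → j ≠ w → (A * Y - Y * A) i j = 0) :
    Y = 0 := by
  have hcomm' : CommutatorVanishesOff A Y Finset.univ w := fun i _ j _ hiw hjw => by
    simpa only [Matrix.sub_apply, Matrix.mul_apply, sub_eq_zero] using hcomm i j hiw hjw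
  ext i j
  exact eq_zero_on_of_duarteAux hskew hYskew hHad htree.isAcyclic N (Finset.mem_univ w)
    (comp_univ_of_connected htree.connected) hD hcomm' i (Finset.mem_univ i) j (Finset.mem_univ j)
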